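/- For all n ≥ 1 and k ≥ 1, the truncated multiple zeta star value satisfies ζ*_n({1}_k) := ∑_{n ≥ ℓ_1 ≥ ... ≥ ℓ_k ≥ 1} 1/(ℓ_1···ℓ_k) = ∑_{j=1}^{n} C(n,j) (-1)^{j-1} / j^k. -/

import Mathlib

/-- The set of weakly decreasing `k`-tuples with entries in `{1,...,n}`. -/
def multisetTuples (n k : ℕ) : Finset (Fin k → ℕ) :=
  (Fintype.piFinset fun _ : Fin k => Finset.Icc 1 n).filter
    fun ℓ => ∀ i j : Fin k, i ≤ j → ℓ j ≤ ℓ i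

/-- The number of adjacent equalities `ℓ_j = ℓ_{j+1}` in a tuple. -/
def sigmaEq {k : ℕ} (ℓ : Fin k → ℕ) : ℕ :=
  (Finset.univ.filter fun p : Fin k × Fin k =>
    (p.2 : ℕ) = (p.1 : ℕ) + 1 ∧ ℓ p.1 = ℓ p.2).card

/-!
Both sides satisfy `F n 0 = 1` for `n ≥ 1` and `F n (k + 1) = ∑_{m=1}^{n} F m k / m`.
For the nested sum this is the split according to the largest index `ℓ₁ = m`. For the binomial
sum `T`, `k = 0` is the vanishing of the alternating sum of binomial coefficients, and the recursion
telescopes in `n`: Pascal's rule `C(n+1, j) = C(n, j) + C(n, j-1)` together with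
`(n+1) C(n, j-1) = j C(n+1, j)` turns the difference `T(n+1, k+1) - T(n, k+1)` into
`T(n+1, k) / (n+1)`.
-/

open Finset

lemma Fin.antitone_cons {α : Type*} [Preorder α] {k : ℕ} {a : α} {ℓ : Fin k → α} :
    Antitone (Fin.cons a ℓ : Fin (k + 1) → α) ↔ (∀ i, ℓ i ≤ a) ∧ Antitone ℓ := by
  simpa only [antitone_iff_forall_lt, Relator.LiftFun, ge_iff_le] using
    Fin.liftFun_cons (· ≥ ·) (f := ℓ) (a := a)

lemma mem_multisetTuples {n k : ℕ} {ℓ : Fin k → ℕ} :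
    ℓ ∈ multisetTuples n k ↔ (∀ i, ℓ i ∈ Icc 1 n) ∧ Antitone ℓ := by
  simp only [multisetTuples, mem_filter, Fintype.mem_piFinset]
  rfl

lemma cons_mem_multisetTuples {n k m : ℕ} {ℓ : Fin k → ℕ} :
    Fin.cons m ℓ ∈ multisetTuples n (k + 1) ↔ m ∈ Icc 1 n ∧ ℓ ∈ multisetTuples m k := by
  simp only [mem_multisetTuples, Fin.forall_fin_succ, Fin.cons_zero, Fin.cons_succ,
    Fin.antitone_cons, mem_Icc]
  grind

lemma sum_multisetTuples_succ {M : Type*} [AddCommMonoid M] (n k : ℕ)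
    (f : (Fin (k + 1) → ℕ) → M) :
    ∑ ℓ ∈ multisetTuples n (k + 1), f ℓ =
      ∑ m ∈ Icc 1 n, ∑ ℓ ∈ multisetTuples m k, f (Fin.cons m ℓ) := by
  rw [sum_sigma']
  refine sum_nbij' (fun ℓ => ⟨ℓ 0, Fin.tail ℓ⟩) (fun p => Fin.cons p.1 p.2) ?_ ?_ ?_ ?_ ?_
  · intro ℓ hℓ
    rw [← Fin.cons_self_tail ℓ, cons_mem_multisetTuples] at hℓ
    simpa using hℓ
  · rintro ⟨m, ℓ⟩ h
    simpa [cons_mem_multisetTuples] using h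
  · intro ℓ _
    exact Fin.cons_self_tail ℓ
  · rintro ⟨m, ℓ⟩ _
    simp
  · intro ℓ _
    rw [Fin.cons_self_tail]

variable {K : Type*} [Field K]

variable (K) in
def zetaStarOnes (n k : ℕ) : K := ∑ ℓ ∈ multisetTuples n k, ∏ i, 1 / (ℓ i : K)

variable (K) in
def alternatingBinomialSum (n k : ℕ) : K :=
  ∑ j ∈ Icc 1 n, (n.choose j : K) * (-1) ^ (j - 1) / (j : K) ^ k

lemma zetaStarOnes_zero (n : ℕ) : zetaStarOnes K n 0 = 1 := by
  have : multisetTuples n 0 = {Fin.elim0} := by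
    ext ℓ
    simp [mem_multisetTuples, Subsingleton.elim ℓ Fin.elim0, Antitone]
  simp [zetaStarOnes, this]

lemma zetaStarOnes_succ (n k : ℕ) :
    zetaStarOnes K n (k + 1) = ∑ m ∈ Icc 1 n, zetaStarOnes K m k / m := by
  simp only [zetaStarOnes, sum_multisetTuples_succ, Fin.prod_univ_succ, Fin.cons_zero,
    Fin.cons_succ, sum_div]
  refine sum_congr rfl fun m _ => sum_congr rfl fun ℓ _ => ?_
  ring

lemma alternatingBinomialSum_zero {n : ℕ} (hn : n ≠ 0) : alternatingBinomialSum K n 0 = 1 := by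
  have h := congrArg (Int.cast : ℤ → K) (Int.alternating_sum_range_choose_of_ne hn)
  push_cast at h
  rw [range_eq_Ico, sum_eq_sum_Ico_succ_bot (by omega), Ico_add_one_right_eq_Icc] at h
  simp only [pow_zero, Nat.choose_zero_right, Nat.cast_one, mul_one, zero_add] at h
  calc alternatingBinomialSum K n 0 = -∑ j ∈ Icc 1 n, (-1) ^ j * (n.choose j : K) := by
        rw [alternatingBinomialSum, ← sum_neg_distrib]
        refine sum_congr rfl fun j hj => ?_
        obtain ⟨i, rfl⟩ : ∃ i, j = i + 1 := ⟨j - 1, by grind⟩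
        rw [add_tsub_cancel_right, pow_succ]
        ring
    _ = 1 := by linear_combination -h

lemma alternatingBinomialSum_succ_succ [CharZero K] (n k : ℕ) :
    alternatingBinomialSum K (n + 1) (k + 1) =
      alternatingBinomialSum K n (k + 1) + alternatingBinomialSum K (n + 1) k / (n + 1) := by
  have termwise : ∀ j ∈ Icc 1 (n + 1),
      ((n + 1).choose j : K) * (-1) ^ (j - 1) / (j : K) ^ (k + 1) =
        (n.choose j : K) * (-1) ^ (j - 1) / (j : K) ^ (k + 1) +
          ((n + 1).choose j : K) * (-1) ^ (j - 1) / (j : K) ^ k / (n + 1) := by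
    intro j hj
    obtain ⟨i, rfl⟩ : ∃ i, j = i + 1 := ⟨j - 1, by grind⟩
    have absorb : ((n : K) + 1) * n.choose i = (n + 1).choose (i + 1) * ((i : K) + 1) := by
      exact_mod_cast Nat.add_one_mul_choose_eq n i
    have pascal : ((n + 1).choose (i + 1) : K) = n.choose i + n.choose (i + 1) := by
      exact_mod_cast Nat.choose_succ_succ' n i
    push_cast
    field_simp
    linear_combination ((i : K) + 1) ^ k * (((n : K) + 1) * pascal + absorb)
  have top : alternatingBinomialSum K n (k + 1) =
      ∑ j ∈ Icc 1 (n + 1), (n.choose j : K) * (-1) ^ (j - 1) / (j : K) ^ (k + 1) := by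
    rw [sum_Icc_succ_top (by omega), Nat.choose_succ_self, Nat.cast_zero, zero_mul, zero_div,
      add_zero, alternatingBinomialSum]
  rw [top, alternatingBinomialSum, alternatingBinomialSum, sum_congr rfl termwise,
    sum_add_distrib, sum_div]

lemma alternatingBinomialSum_succ [CharZero K] (n k : ℕ) :
    alternatingBinomialSum K n (k + 1) = ∑ m ∈ Icc 1 n, alternatingBinomialSum K m k / m := by
  induction n with
  | zero => simp [alternatingBinomialSum]
  | succ n ih =>
    rw [alternatingBinomialSum_succ_succ, ih, sum_Icc_succ_top (by omega)]
    push_cast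
    rfl

theorem zetaStarOnes_eq_alternatingBinomialSum [CharZero K] {n : ℕ} (hn : n ≠ 0) (k : ℕ) :
    zetaStarOnes K n k = alternatingBinomialSum K n k := by
  induction k generalizing n with
  | zero => rw [zetaStarOnes_zero, alternatingBinomialSum_zero hn]
  | succ k ih =>
    rw [zetaStarOnes_succ, alternatingBinomialSum_succ]
    exact sum_congr rfl fun m hm => by rw [ih (by grind)]

theorem zeta_star_binomial_sum_general (n k : ℕ) (hn : 1 ≤ n) :
    (∑ ℓ ∈ multisetTuples n k, ∏ i, (1 : ℝ) / (ℓ i : ℝ)) =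
      ∑ j ∈ Finset.Icc 1 n, (n.choose j : ℝ) * (-1 : ℝ) ^ (j - 1) / (j : ℝ) ^ k :=
  zetaStarOnes_eq_alternatingBinomialSum (by omega) k

theorem zeta_star_binomial_sum (n k : ℕ) (hn : 1 ≤ n) (hk : 1 ≤ k) :
    (∑ ℓ ∈ multisetTuples n k, ∏ i, (1 : ℝ) / (ℓ i : ℝ)) =
      ∑ j ∈ Finset.Icc 1 n, (n.choose j : ℝ) * (-1 : ℝ) ^ (j - 1) / (j : ℝ) ^ k :=
  zeta_star_binomial_sum_general n k hn
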